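/- Consider a sequence of policies u^(0), u^(1), ..., each in a finite policy set U, such that for each k the policy u^(k+1) satisfies P(R^{u^(k+1)} ≤ VaR^{u^(k)}) < α whenever the update occurs. Then the sequence (VaR^{u^(k)})_k is strictly increasing, and hence the iteration terminates within at most |U| steps at a policy u^(n) satisfying min_{u ∈ U} P(R^u ≤ VaR^{u^(n)}) ≥ α, which is optimal: VaR^{u^(n)} = max_{u ∈ U} VaR^u. -/
import Mathlib


open MeasureTheory Finset

noncomputable def cdfOf {Ω : Type*} [MeasurableSpace Ω] (μ : Measure Ω) (X : Ω → ℝ) (l : ℝ) : ℝ :=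
  (μ {ω | X ω ≤ l}).toReal

noncomputable def VaR {Ω : Type*} [MeasurableSpace Ω] (μ : Measure Ω) (X : Ω → ℝ) (α : ℝ) : ℝ :=
  sInf {l : ℝ | α ≤ cdfOf μ X l}

noncomputable def VaRFin {Ω : Type*} [MeasurableSpace Ω] (μ : Measure Ω) (X : Ω → ℝ)
    (Λ : Finset ℝ) (α : ℝ) : ℝ :=
  sInf {l : ℝ | l ∈ Λ ∧ α ≤ cdfOf μ X l}

noncomputable def leftPred (Y : Finset ℝ) (hY : Y.Nonempty) (l : ℝ) : ℝ :=
  if h : Y.min' hY < l then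
    (Y.filter fun y => y < l).max' ⟨Y.min' hY, Finset.mem_filter.mpr ⟨Y.min'_mem hY, h⟩⟩
  else l - 1

lemma cdf_mono {Ω : Type*} [MeasurableSpace Ω] (μ : Measure Ω) [IsProbabilityMeasure μ]
    (X : Ω → ℝ) {a b : ℝ} (hab : a ≤ b) : cdfOf μ X a ≤ cdfOf μ X b := by
  apply ENNReal.toReal_mono (measure_ne_top μ _)
  exact measure_mono (fun ω hω => le_trans hω hab)

lemma var_isLeast {Ω : Type*} [MeasurableSpace Ω] (μ : Measure Ω) [IsProbabilityMeasure μ]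
    (X : Ω → ℝ) (Λ : Finset ℝ) (hΛ : Λ.Nonempty) (hX : ∀ ω, X ω ∈ Λ)
    {α : ℝ} (hα0 : 0 < α) (hα1 : α ≤ 1) :
    IsLeast {l : ℝ | α ≤ cdfOf μ X l} (VaR μ X α) ∧ VaR μ X α ∈ Λ := by
  have hmax : cdfOf μ X (Λ.max' hΛ) = 1 := by
    unfold cdfOf
    have huniv : {ω | X ω ≤ Λ.max' hΛ} = Set.univ := by
      ext ω; simp [Finset.le_max' Λ _ (hX ω)]
    rw [huniv, measure_univ, ENNReal.toReal_one]
  have hT : (Λ.filter (fun l => α ≤ cdfOf μ X l)).Nonempty :=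
    ⟨Λ.max' hΛ, Finset.mem_filter.mpr ⟨Λ.max'_mem hΛ, by rw [hmax]; exact hα1⟩⟩
  set T := Λ.filter (fun l => α ≤ cdfOf μ X l) with hTdef
  set m := T.min' hT with hm
  have hmT : m ∈ T := T.min'_mem hT
  have hmem : m ∈ {l : ℝ | α ≤ cdfOf μ X l} := (Finset.mem_filter.mp hmT).2
  have hlb : ∀ l ∈ {l : ℝ | α ≤ cdfOf μ X l}, m ≤ l := by
    intro l hl
    have hpos : 0 < cdfOf μ X l := lt_of_lt_of_le hα0 hl
    have hne : {ω | X ω ≤ l}.Nonempty := by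
      by_contra hcon
      rw [Set.not_nonempty_iff_eq_empty] at hcon
      simp [cdfOf, hcon] at hpos
    obtain ⟨ω, hω⟩ := hne
    have hF : (Λ.filter (fun y => y ≤ l)).Nonempty :=
      ⟨X ω, Finset.mem_filter.mpr ⟨hX ω, hω⟩⟩
    set f := (Λ.filter (fun y => y ≤ l)).max' hF with hf
    have hfmem := (Λ.filter (fun y => y ≤ l)).max'_mem hF
    have hfΛ : f ∈ Λ := (Finset.mem_filter.mp hfmem).1
    have hfl : f ≤ l := (Finset.mem_filter.mp hfmem).2
    have hset : {ω' | X ω' ≤ f} = {ω' | X ω' ≤ l} := by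
      ext ω'
      constructor
      · exact fun h' => le_trans h' hfl
      · exact fun h' => Finset.le_max' _ _ (Finset.mem_filter.mpr ⟨hX ω', h'⟩)
    have heq : cdfOf μ X f = cdfOf μ X l := by
      unfold cdfOf; rw [hset]
    have hfT : f ∈ T := Finset.mem_filter.mpr ⟨hfΛ, by rw [heq]; exact hl⟩
    exact le_trans (Finset.min'_le T f hfT) hfl
  have hleast : IsLeast {l : ℝ | α ≤ cdfOf μ X l} m := ⟨hmem, hlb⟩
  have hVaR : VaR μ X α = m := by
    unfold VaR; exact hleast.csInf_eq
  rw [hVaR]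
  exact ⟨hleast, (Finset.mem_filter.mp hmT).1⟩

theorem stmt14 {Ω U : Type*} [MeasurableSpace Ω] [Fintype U] [Nonempty U]
    (μ : Measure Ω) [IsProbabilityMeasure μ]
    (R : U → Ω → ℝ) (Λ : Finset ℝ) (hΛ : Λ.Nonempty)
    (hR : ∀ u ω, R u ω ∈ Λ) (α : ℝ) (hα0 : 0 < α) (hα1 : α ≤ 1)
    (useq : ℕ → U) (n : ℕ)
    (hstep : ∀ k < n, cdfOf μ (R (useq (k+1))) (VaR μ (R (useq k)) α) < α) :
    (∀ k < n, VaR μ (R (useq k)) α < VaR μ (R (useq (k+1))) α)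
    ∧ n < Fintype.card U
    ∧ ((∀ v : U, α ≤ cdfOf μ (R v) (VaR μ (R (useq n)) α)) →
        VaR μ (R (useq n)) α
          = Finset.univ.sup' Finset.univ_nonempty (fun u => VaR μ (R u) α)) := by
  have hkey : ∀ u : U, IsLeast {l : ℝ | α ≤ cdfOf μ (R u) l} (VaR μ (R u) α)
      ∧ VaR μ (R u) α ∈ Λ := fun u => var_isLeast μ (R u) Λ hΛ (hR u) hα0 hα1
  have hstrict : ∀ k < n, VaR μ (R (useq k)) α < VaR μ (R (useq (k+1))) α := by
    intro k hk
    by_contra hcon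
    push_neg at hcon
    have h1 : α ≤ cdfOf μ (R (useq (k+1))) (VaR μ (R (useq (k+1))) α) :=
      (hkey (useq (k+1))).1.1
    have h2 := le_trans h1 (cdf_mono μ (R (useq (k+1))) hcon)
    exact absurd (hstep k hk) (not_lt.mpr h2)
  have hmono : ∀ j ≤ n, ∀ i < j, VaR μ (R (useq i)) α < VaR μ (R (useq j)) α := by
    intro j
    induction j with
    | zero => intro _ i hi; omega
    | succ j ih =>
      intro hj i hi
      have hjn : j < n := by omega
      rcases Nat.lt_succ_iff_lt_or_eq.mp hi with h | h
      · exact lt_trans (ih (le_of_lt hjn) i h) (hstrict j hjn)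
      · rw [h]; exact hstrict j hjn
  refine ⟨hstrict, ?_, ?_⟩
  · have hinj : Function.Injective (fun i : Fin (n+1) => useq i) := by
      intro i j hij
      by_contra hne
      have hne' : (i : ℕ) ≠ (j : ℕ) := fun h => hne (Fin.ext h)
      rcases lt_or_gt_of_ne hne' with h | h
      · have := hmono j (Nat.lt_succ_iff.mp j.isLt) i h
        rw [show useq (i : ℕ) = useq (j : ℕ) from hij] at this
        exact lt_irrefl _ this
      · have := hmono i (Nat.lt_succ_iff.mp i.isLt) j h
        rw [show useq (i : ℕ) = useq (j : ℕ) from hij] at this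
        exact lt_irrefl _ this
    have := Fintype.card_le_of_injective _ hinj
    simpa using this
  · intro h
    apply le_antisymm
    · exact Finset.le_sup' (fun u => VaR μ (R u) α) (Finset.mem_univ (useq n))
    · apply Finset.sup'_le
      intro u _
      exact (hkey u).1.2 (h u)
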